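/- Let (a_i)_{i∈ℤ} be square-summable real numbers and for n∈ℕ, j∈ℤ set b_{n,j} = ∑_{i=1}^n a_{i−j} and b_n = (∑_{j∈ℤ} b_{n,j}²)^{1/2} (with b_0 = 0). Then for all n, m ∈ ℕ, ∑_{j∈ℤ} b_{n,j} b_{m,j} = ½ (b_n² + b_m² − b_{|n−m|}²), all series converging absolutely. -/

import Mathlib

open MeasureTheory ProbabilityTheory Filter Topology BoundedContinuousFunction
open scoped ENNReal NNReal BigOperators

/-- Product-form coefficients `a_i = ∏_{q=1}^d a_{i_q}(q)`. -/
def prodCoef {d : ℕ} (aq : Fin d → ℤ → ℝ) (i : Fin d → ℤ) : ℝ :=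
  ∏ q : Fin d, aq q (i q)

/-- The rectangle `Λ_n = {1,…,n_1} × ⋯ × {1,…,n_d} ⊂ ℤ^d`. -/
noncomputable def Lambda (d : ℕ) (n : Fin d → ℕ) : Finset (Fin d → ℤ) :=
  Fintype.piFinset fun q => Finset.Icc 1 (n q : ℤ)

/-- `b_{n,j} = ∑_{i ∈ Λ_n} a_{i-j}` for product-form coefficients. -/
noncomputable def bProd {d : ℕ} (aq : Fin d → ℤ → ℝ) (n : Fin d → ℕ) (j : Fin d → ℤ) : ℝ :=
  ∑ i ∈ Lambda d n, prodCoef aq (i - j)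

/-- One-dimensional coefficients `b_{n,j}(q) = ∑_{i=1}^{n_q} a_{i-j_q}(q)`. -/
noncomputable def b1 (a : ℤ → ℝ) (nq : ℕ) (jq : ℤ) : ℝ :=
  ∑ i ∈ Finset.Icc (1 : ℤ) (nq : ℤ), a (i - jq)

/-- `b_n(q) = (∑_{j_q ∈ ℤ} b_{n,j}(q)²)^{1/2}`. -/
noncomputable def b1norm (a : ℤ → ℝ) (nq : ℕ) : ℝ :=
  Real.sqrt (∑' j : ℤ, (b1 a nq j) ^ 2)

/-! Since `b_{m+k,j} = b_{m,j} + b_{k,j-m}`, the difference `b_{n,·} - b_{m,·}` is a translate of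
`b_{|n-m|,·}` and so has squared `ℓ²` norm `b_{|n-m|}²`; the identity is then polarization in
`ℓ²(ℤ)`. Every series converges because each `b_{n,·}` is a finite sum of translates of `a ∈ ℓ²`. -/

lemma summable_sq_sum_sub {G : Type*} [AddGroup G] {a : G → ℝ}
    (ha : Summable fun i => a i ^ 2) (s : Finset G) :
    Summable fun j => (∑ i ∈ s, a (i - j)) ^ 2 := by
  have hshift (i : G) : Summable fun j => a (i - j) ^ 2 :=
    ha.comp_injective (sub_right_injective (b := i))
  refine .of_nonneg_of_le (fun _ => sq_nonneg _) (fun _ => sq_sum_le_card_mul_sum_sq)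
    ((summable_sum fun i _ => hshift i).mul_left _)

lemma Summable.abs_mul_of_summable_sq {ι : Type*} {f g : ι → ℝ}
    (hf : Summable fun i => f i ^ 2) (hg : Summable fun i => g i ^ 2) :
    Summable fun i => |f i * g i| := by
  refine .of_nonneg_of_le (fun _ => abs_nonneg _) (fun i => ?_) ((hf.add hg).mul_left (1 / 2))
  have := two_mul_le_add_sq |f i| |g i|
  rw [abs_mul]
  simp only [sq_abs] at this
  linarith

lemma tsum_mul_eq_half_sub_tsum_sq_sub {ι : Type*} {f g : ι → ℝ}
    (hf : Summable fun i => f i ^ 2) (hg : Summable fun i => g i ^ 2) :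
    ∑' i, f i * g i = (1 / 2) * (∑' i, f i ^ 2 + ∑' i, g i ^ 2 - ∑' i, (f i - g i) ^ 2) := by
  have hfg : Summable fun i => f i * g i := (hf.abs_mul_of_summable_sq hg).of_abs
  have hsq : ∑' i, (f i - g i) ^ 2 = ∑' i, f i ^ 2 + ∑' i, g i ^ 2 - 2 * ∑' i, f i * g i := by
    simp_rw [sub_sq', mul_assoc, ← tsum_mul_left]
    rw [(hf.add hg).tsum_sub (hfg.mul_left 2), hf.tsum_add hg]
  rw [hsq]; ring

lemma b1_succ (a : ℤ → ℝ) (n : ℕ) (j : ℤ) : b1 a (n + 1) j = b1 a n j + a (n + 1 - j) := by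
  rw [b1, b1, Nat.cast_succ, ← Finset.insert_Icc_right_eq_Icc_add_one (by omega),
    Finset.sum_insert (by simp), add_comm]

lemma b1_add (a : ℤ → ℝ) (m k : ℕ) (j : ℤ) : b1 a (m + k) j = b1 a m j + b1 a k (j - m) := by
  induction k with
  | zero => simp [b1]
  | succ k ih =>
    rw [← add_assoc, b1_succ, ih, b1_succ, add_assoc]
    push_cast
    ring_nf

lemma summable_sq_b1 {a : ℤ → ℝ} (ha : Summable fun i => a i ^ 2) (n : ℕ) :
    Summable fun j => b1 a n j ^ 2 :=
  summable_sq_sum_sub ha _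

lemma tsum_b1_mul_b1_of_le {a : ℤ → ℝ} (ha : Summable fun i => a i ^ 2) {n m : ℕ} (h : m ≤ n) :
    ∑' j, b1 a n j * b1 a m j =
      (1 / 2) * (∑' j, b1 a n j ^ 2 + ∑' j, b1 a m j ^ 2 - ∑' j, b1 a (Nat.dist n m) j ^ 2) := by
  rw [Nat.dist_eq_sub_of_le_right h]
  obtain ⟨k, rfl⟩ := Nat.exists_eq_add_of_le h
  have hdiff (j : ℤ) : b1 a (m + k) j - b1 a m j = b1 a k (j - m) := by
    rw [b1_add]; ring
  have hshift : ∑' j, b1 a k j ^ 2 = ∑' j, (b1 a (m + k) j - b1 a m j) ^ 2 := by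
    simp_rw [hdiff]
    exact ((Equiv.subRight (m : ℤ)).tsum_eq fun j => b1 a k j ^ 2).symm
  rw [Nat.add_sub_cancel_left, hshift]
  exact tsum_mul_eq_half_sub_tsum_sq_sub (summable_sq_b1 ha _) (summable_sq_b1 ha _)

/-- one-dimensional polarization identity:
`∑_j b_{n,j} b_{m,j} = ½ (b_n² + b_m² - b_{|n-m|}²)`, all series converging absolutely. -/
theorem one_dim_polarization
    (a : ℤ → ℝ) (ha : Summable fun i : ℤ => (a i) ^ 2) (n m : ℕ) :
    Summable (fun j : ℤ => |b1 a n j * b1 a m j|) ∧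
    ∑' j : ℤ, b1 a n j * b1 a m j =
      (1 / 2) * ((∑' j : ℤ, (b1 a n j) ^ 2) + (∑' j : ℤ, (b1 a m j) ^ 2) -
        ∑' j : ℤ, (b1 a (Nat.dist n m) j) ^ 2) := by
  refine ⟨(summable_sq_b1 ha n).abs_mul_of_summable_sq (summable_sq_b1 ha m), ?_⟩
  rcases le_total m n with h | h
  · exact tsum_b1_mul_b1_of_le ha h
  · simp_rw [mul_comm (b1 a n _), tsum_b1_mul_b1_of_le ha h, Nat.dist_comm m n]
    ring
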